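/- In the AdaDiag ODE, any point (W, M, V) in the invariant set where dH/dt ≡ 0 along the trajectory must satisfy P(t)^T ∇L(W) = 0; since P(t) is full-rank orthogonal, this implies ∇L(W) = 0, i.e., all trajectories converge to stationary points of L. -/

import Mathlib

open Matrix

attribute [local instance] Matrix.frobeniusNormedAddCommGroup Matrix.frobeniusNormedSpace

/-- Frobenius inner product of matrices. -/
def mInner {m n : ℕ} (A B : Matrix (Fin m) (Fin n) ℝ) : ℝ :=
  ∑ i, ∑ j, A i j * B i j

/-!
Write `g = Pᵀ ∇L(W)`. Along the flow, the term `-gᵢⱼ Mᵢⱼ / (√Vᵢⱼ + ε)` that `L(W)` contributes to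
`dH/dt` cancels the cross term in the derivative of the kinetic part, leaving
`dH/dt = -∑ᵢⱼ Mᵢⱼ² cᵢⱼ` with every coefficient `cᵢⱼ = adadiagDissipation ε Vᵢⱼ gᵢⱼ` positive.
So `dH/dt ≡ 0` forces `M ≡ 0`; then `dM/dt = g - M` gives `g = 0`, and `∇L(W) = P g = 0`.
-/

theorem Matrix.hasDerivAt_of_hasDerivAt_apply {m n : Type*} [Fintype m] [Fintype n]
    [DecidableEq m] [DecidableEq n] {f : ℝ → Matrix m n ℝ} {f' : Matrix m n ℝ} {t : ℝ}
    (h : ∀ i j, HasDerivAt (fun s => f s i j) (f' i j) t) :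
    HasDerivAt f f' t := by
  have expand : ∀ A : Matrix m n ℝ, ∑ i, ∑ j, A i j • single i j (1 : ℝ) = A := by
    intro A
    conv_rhs => rw [matrix_eq_sum_single A]
    simp [smul_single]
  have hsum : HasDerivAt (fun s => ∑ i, ∑ j, f s i j • single i j (1 : ℝ))
      (∑ i, ∑ j, f' i j • single i j (1 : ℝ)) t :=
    HasDerivAt.fun_sum fun i _ => HasDerivAt.fun_sum fun j _ => (h i j).smul_const _
  simpa only [expand] using hsum

theorem mInner_eq_trace {m n : ℕ} (A B : Matrix (Fin m) (Fin n) ℝ) :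
    mInner A B = (Aᵀ * B).trace := by
  simp only [mInner, trace, diag_apply, mul_apply, transpose_apply]
  exact Finset.sum_comm

theorem mInner_mul_right {m n : ℕ} (A : Matrix (Fin m) (Fin n) ℝ)
    (P : Matrix (Fin m) (Fin m) ℝ) (B : Matrix (Fin m) (Fin n) ℝ) :
    mInner A (P * B) = mInner (Pᵀ * A) B := by
  rw [mInner_eq_trace, mInner_eq_trace, transpose_mul, transpose_transpose, Matrix.mul_assoc]

theorem Matrix.eq_zero_of_sum_sq_mul_eq_zero {m n : Type*} [Fintype m] [Fintype n]
    {A c : Matrix m n ℝ} (hc : ∀ i j, 0 < c i j) (h : ∑ i, ∑ j, A i j ^ 2 * c i j = 0) :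
    A = 0 := by
  have hnonneg : ∀ i j, 0 ≤ A i j ^ 2 * c i j := fun i j => by have := hc i j; positivity
  ext i j
  have hrow := (Finset.sum_eq_zero_iff_of_nonneg fun i _ =>
    Finset.sum_nonneg fun j _ => hnonneg i j).1 h i (Finset.mem_univ i)
  have hij := (Finset.sum_eq_zero_iff_of_nonneg fun j _ => hnonneg i j).1 hrow j (Finset.mem_univ j)
  simpa [(hc i j).ne'] using hij

noncomputable def adadiagDissipation (ε v g : ℝ) : ℝ :=
  (3 * v + 4 * √v * ε + g ^ 2) / (4 * √v * (√v + ε) ^ 2)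

theorem adadiagDissipation_pos {ε v : ℝ} (hε : 0 ≤ ε) (hv : 0 < v) (g : ℝ) :
    0 < adadiagDissipation ε v g := by
  have := Real.sqrt_pos.2 hv
  unfold adadiagDissipation
  positivity

theorem hasDerivAt_div_sqrt_add_mul_self {μ ν : ℝ → ℝ} {g ε t : ℝ} (hε : 0 ≤ ε)
    (hν : 0 < ν t) (hμ' : HasDerivAt μ (g - μ t) t) (hν' : HasDerivAt ν (g ^ 2 - ν t) t) :
    HasDerivAt (fun s => μ s / (√(ν s) + ε) * μ s)
      (2 * (g * (μ t / (√(ν t) + ε)) - μ t ^ 2 * adadiagDissipation ε (ν t) g)) t := by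
  have hr : 0 < √(ν t) := Real.sqrt_pos.2 hν
  have hsqrt := hν'.sqrt hν.ne'
  refine ((hμ'.fun_div (hsqrt.add_const ε) (by positivity)).fun_mul hμ').congr_deriv ?_
  rw [adadiagDissipation, ← Real.sq_sqrt hν.le]
  field_simp
  rw [Real.sqrt_sq hr.le]
  ring

theorem hasDerivAt_adadiag_energy {m n : ℕ} {L : Matrix (Fin m) (Fin n) ℝ → ℝ}
    {G : Matrix (Fin m) (Fin n) ℝ → Matrix (Fin m) (Fin n) ℝ}
    {l : Matrix (Fin m) (Fin n) ℝ → (Matrix (Fin m) (Fin n) ℝ →L[ℝ] ℝ)}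
    (hL : ∀ X, HasFDerivAt L (l X) X) (hl : ∀ X H, l X H = mInner (G X) H)
    {ε : ℝ} (hε : 0 ≤ ε) {P : Matrix (Fin m) (Fin m) ℝ} {W M V : ℝ → Matrix (Fin m) (Fin n) ℝ}
    {t : ℝ} (hV : ∀ i j, 0 < V t i j)
    (hW : ∀ i j, HasDerivAt (fun s => W s i j)
      (-((P * Matrix.of fun a b => M t a b / (√(V t a b) + ε)) i j)) t)
    (hM : ∀ i j, HasDerivAt (fun s => M s i j) ((Pᵀ * G (W t)) i j - M t i j) t)
    (hVd : ∀ i j, HasDerivAt (fun s => V s i j) (((Pᵀ * G (W t)) i j) ^ 2 - V t i j) t) :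
    HasDerivAt (fun s => L (W s) +
        (1 / 2) * mInner (Matrix.of fun i j => M s i j / (√(V s i j) + ε)) (M s))
      (-∑ i, ∑ j, M t i j ^ 2 * adadiagDissipation ε (V t i j) ((Pᵀ * G (W t)) i j)) t := by
  have hLW : HasDerivAt (fun s => L (W s))
      (mInner (G (W t)) (-(P * Matrix.of fun a b => M t a b / (√(V t a b) + ε)))) t := by
    rw [← hl]
    exact (hL (W t)).comp_hasDerivAt t (Matrix.hasDerivAt_of_hasDerivAt_apply hW)
  have hkin : HasDerivAt (fun s => mInner (Matrix.of fun i j => M s i j / (√(V s i j) + ε)) (M s))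
      _ t :=
    HasDerivAt.fun_sum fun i _ => HasDerivAt.fun_sum fun j _ =>
      hasDerivAt_div_sqrt_add_mul_self hε (hV i j) (hM i j) (hVd i j)
  refine (hLW.add (hkin.const_mul (1 / 2))).congr_deriv ?_
  rw [← Matrix.mul_neg, mInner_mul_right]
  simp only [mInner, Finset.mul_sum, ← Finset.sum_add_distrib, ← Finset.sum_neg_distrib]
  refine Finset.sum_congr rfl fun i _ => Finset.sum_congr rfl fun j _ => ?_
  simp only [Matrix.neg_apply, of_apply]
  ring

/-- In the AdaDiag ODE, any trajectory along which dH/dt ≡ 0 (i.e. lying in the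
invariant set) must satisfy P(t)ᵀ ∇L(W(t)) = 0 for all t; since P(t) is full-rank
orthogonal this gives ∇L(W(t)) = 0, i.e. the trajectory consists of stationary
points of L. -/
theorem adadiag_invariant_set_stationary {m n : ℕ}
    (L : Matrix (Fin m) (Fin n) ℝ → ℝ)
    (G : Matrix (Fin m) (Fin n) ℝ → Matrix (Fin m) (Fin n) ℝ)
    (l : Matrix (Fin m) (Fin n) ℝ → (Matrix (Fin m) (Fin n) ℝ →L[ℝ] ℝ))
    (hL : ∀ X, HasFDerivAt L (l X) X)
    (hl : ∀ X H, l X H = mInner (G X) H)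
    (ε : ℝ) (hε : 0 < ε)
    (P : ℝ → Matrix (Fin m) (Fin m) ℝ)
    (hP : ∀ t, P t * (P t)ᵀ = 1 ∧ (P t)ᵀ * P t = 1)
    (W M V : ℝ → Matrix (Fin m) (Fin n) ℝ)
    (hV : ∀ t i j, 0 < V t i j)
    (hW : ∀ t i j, HasDerivAt (fun s => W s i j)
      (-((P t * Matrix.of fun a b => M t a b / (Real.sqrt (V t a b) + ε)) i j)) t)
    (hM : ∀ t i j, HasDerivAt (fun s => M s i j)
      (((P t)ᵀ * G (W t)) i j - M t i j) t)
    (hVd : ∀ t i j, HasDerivAt (fun s => V s i j)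
      ((((P t)ᵀ * G (W t)) i j) ^ 2 - V t i j) t)
    (hstationary : ∀ t, HasDerivAt (fun s => L (W s) +
        (1 / 2) * mInner (Matrix.of fun i j => M s i j / (Real.sqrt (V s i j) + ε)) (M s))
        0 t) :
    ∀ t, (P t)ᵀ * G (W t) = 0 ∧ G (W t) = 0 := by
  have hM0 : ∀ t, M t = 0 := fun t =>
    Matrix.eq_zero_of_sum_sq_mul_eq_zero (fun i j => adadiagDissipation_pos hε.le (hV t i j) _)
      (neg_eq_zero.1 ((hasDerivAt_adadiag_energy hL hl hε.le (hV t) (hW t) (hM t) (hVd t)).unique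
        (hstationary t)))
  have hPG : ∀ t, (P t)ᵀ * G (W t) = 0 := by
    intro t
    ext i j
    have hconst : HasDerivAt (fun s => M s i j) 0 t := by
      simpa only [hM0, Matrix.zero_apply] using hasDerivAt_const t (0 : ℝ)
    simpa [hM0] using (hM t i j).unique hconst
  intro t
  refine ⟨hPG t, ?_⟩
  rw [← Matrix.one_mul (G (W t)), ← (hP t).1, Matrix.mul_assoc, hPG t, Matrix.mul_zero]
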